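/- arXiv:1912.12201 — 2 statements merged into one kernel-verified Lean document; each statement's English description precedes it below -/
import Mathlib

section
/- Let Z = {z_k} ⊂ ℂ be a sequence separated from the imaginary axis, i.e., there exists c > 0 with |Re z_k| ≥ c|z_k| for all sufficiently large k, with all z_k ≠ 0. If there is a constant C ≥ 0 such that l_Z(r,R) ≤ C·ln(R/r) + C for all 0 < r < R < +∞, where l_Z(r,R) = max{Σ_{r<|z_k|≤R, Re z_k>0} Re(1/z_k), Σ_{r<|z_k|≤R, Re z_k<0} Re(−1/z_k)}, then Z has finite upper density: limsup_{r→∞} n_Z(r)/r < +∞. -/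
/-!
If `k ≥ N` and `r < |z_k| ≤ 2r`, separation gives `|Re(1/z_k)| = |Re z_k| / |z_k|² ≥ c / (2r)`,
so each such point contributes at least `c / (2r)` to one of the two sums in `l_Z(r, 2r)`,
which is at most `C ln 2 + C`. Hence the annulus `r < |z| ≤ 2r` holds `O(r)` points,
`n_Z(2r) ≤ n_Z(r) + O(r)`, and summing over dyadic scales gives `n_Z(r) = O(r)`.
-/

open Filter Complex

lemma div_le_inv_re_of_mul_norm_le_re {w : ℂ} {c R : ℝ} (hc : 0 ≤ c) (hw : w ≠ 0)
    (hsep : c * ‖w‖ ≤ w.re) (hR : ‖w‖ ≤ R) : c / R ≤ (w⁻¹).re := by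
  have hw0 : 0 < ‖w‖ := norm_pos_iff.mpr hw
  calc c / R ≤ c / ‖w‖ := div_le_div_of_nonneg_left hc hw0 hR
    _ = c * ‖w‖ / ‖w‖ ^ 2 := by field_simp
    _ ≤ w.re / ‖w‖ ^ 2 := by gcongr
    _ = (w⁻¹).re := by rw [inv_re, normSq_eq_norm_sq]

lemma Set.Finite.ncard_mul_le_tsum {ι : Type*} {f : ι → ℝ} (hf : ∀ i, 0 ≤ f i) (hfs : Summable f)
    {s : Set ι} (hs : s.Finite) {a : ℝ} (ha : ∀ i ∈ s, a ≤ f i) :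
    s.ncard * a ≤ ∑' i, f i := by
  rw [Set.ncard_eq_toFinset_card s hs, ← nsmul_eq_mul]
  calc _ ≤ ∑ i ∈ hs.toFinset, f i := Finset.card_nsmul_le_sum _ _ _ (by simpa using ha)
    _ ≤ ∑' i, f i := hfs.sum_le_tsum _ fun i _ => hf i

lemma ncard_right_annulus_le (w : ℕ → ℂ) {N : ℕ} {c r R : ℝ} (hc : 0 < c) (hR : 0 < R)
    (hfin : {k | ‖w k‖ ≤ R}.Finite) (hsep : ∀ k ≥ N, c * ‖w k‖ ≤ |(w k).re|) :
    ({k | N ≤ k ∧ r < ‖w k‖ ∧ ‖w k‖ ≤ R ∧ 0 < (w k).re}.ncard : ℝ) ≤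
      R / c * ∑' k, if r < ‖w k‖ ∧ ‖w k‖ ≤ R ∧ 0 < (w k).re then ((w k)⁻¹).re else 0 := by
  rw [div_mul_eq_mul_div, mul_comm R, ← div_div_eq_mul_div, le_div_iff₀ (by positivity)]
  refine Set.Finite.ncard_mul_le_tsum (fun k => ?_) (summable_of_hasFiniteSupport ?_)
    (hfin.subset fun k hk => hk.2.2.1) ?_
  · split_ifs with h
    · rw [inv_re]
      exact div_nonneg h.2.2.le (normSq_nonneg _)
    · rfl
  · refine hfin.subset fun k hk => ?_
    by_contra hkR
    exact hk (if_neg fun h => hkR h.2.1)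
  · rintro k ⟨hkN, hrk, hkR, hre⟩
    rw [if_pos ⟨hrk, hkR, hre⟩]
    refine div_le_inv_re_of_mul_norm_le_re hc.le (fun h => by simp [h] at hre) ?_ hkR
    simpa [abs_of_pos hre] using hsep k hkN

lemma ncard_left_annulus_le (w : ℕ → ℂ) {N : ℕ} {c r R : ℝ} (hc : 0 < c) (hR : 0 < R)
    (hfin : {k | ‖w k‖ ≤ R}.Finite) (hsep : ∀ k ≥ N, c * ‖w k‖ ≤ |(w k).re|) :
    ({k | N ≤ k ∧ r < ‖w k‖ ∧ ‖w k‖ ≤ R ∧ (w k).re < 0}.ncard : ℝ) ≤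
      R / c * ∑' k, if r < ‖w k‖ ∧ ‖w k‖ ≤ R ∧ (w k).re < 0 then -((w k)⁻¹).re else 0 := by
  simpa using ncard_right_annulus_le (-w) hc hR (r := r) (by simpa using hfin) (by simpa using hsep)

lemma ncard_norm_le_le_add_annuli (z : ℕ → ℂ) {N : ℕ} {c r R : ℝ} (hc : 0 < c) (hr : 0 ≤ r)
    (hfin : ∀ ρ : ℝ, {k | ‖z k‖ ≤ ρ}.Finite) (hsep : ∀ k ≥ N, c * ‖z k‖ ≤ |(z k).re|) :
    {k | ‖z k‖ ≤ R}.ncard ≤ {k | ‖z k‖ ≤ r}.ncard + N +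
      {k | N ≤ k ∧ r < ‖z k‖ ∧ ‖z k‖ ≤ R ∧ 0 < (z k).re}.ncard +
      {k | N ≤ k ∧ r < ‖z k‖ ∧ ‖z k‖ ≤ R ∧ (z k).re < 0}.ncard := by
  set P := {k | N ≤ k ∧ r < ‖z k‖ ∧ ‖z k‖ ≤ R ∧ 0 < (z k).re}
  set M := {k | N ≤ k ∧ r < ‖z k‖ ∧ ‖z k‖ ≤ R ∧ (z k).re < 0}
  have hcover : {k | ‖z k‖ ≤ R} ⊆ {k | ‖z k‖ ≤ r} ∪ ↑(Finset.range N) ∪ P ∪ M := by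
    intro k hkR
    by_cases hkr : ‖z k‖ ≤ r
    · exact .inl <| .inl <| .inl hkr
    by_cases hkN : k < N
    · exact .inl <| .inl <| .inr <| by simpa using hkN
    push Not at hkr hkN
    have hre : (z k).re ≠ 0 := fun h0 => by
      have := hsep k hkN
      rw [h0, abs_zero] at this
      nlinarith
    rcases hre.lt_or_gt with h | h
    · exact .inr ⟨hkN, hkr, hkR, h⟩
    · exact .inl <| .inr ⟨hkN, hkr, hkR, h⟩
  have hP : P ⊆ {k | ‖z k‖ ≤ R} := fun k hk => hk.2.2.1
  have hM : M ⊆ {k | ‖z k‖ ≤ R} := fun k hk => hk.2.2.1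
  calc _ ≤ _ := Set.ncard_le_ncard hcover
        ((((hfin r).union (Finset.finite_toSet _)).union ((hfin R).subset hP)).union
          ((hfin R).subset hM))
    _ ≤ _ := by
      grw [Set.ncard_union_le, Set.ncard_union_le, Set.ncard_union_le, Set.ncard_coe_finset,
        Finset.card_range]

lemma isBoundedUnder_div_of_le_two_mul {f : ℝ → ℝ} (hf : Monotone f) {a : ℝ} (ha : 0 ≤ a)
    (h : ∀ r ≥ 1, f (2 * r) ≤ f r + a * r) :
    IsBoundedUnder (· ≤ ·) atTop fun r => f r / r := by
  have hpow : ∀ m : ℕ, f (2 ^ m) ≤ f 1 + a * 2 ^ m := by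
    intro m
    induction m with
    | zero => simpa using ha
    | succ m ih =>
      have := h (2 ^ m) (one_le_pow₀ one_le_two)
      rw [pow_succ']
      linarith
  refine ⟨|f 1| + 2 * a, eventually_map.2 ?_⟩
  filter_upwards [eventually_ge_atTop 1] with r hr
  obtain ⟨m, hmr, hrm⟩ := exists_nat_pow_near hr one_lt_two
  rw [div_le_iff₀ (by linarith)]
  calc f r ≤ f (2 ^ (m + 1)) := hf hrm.le
    _ ≤ f 1 + a * 2 ^ (m + 1) := hpow _
    _ ≤ (|f 1| + 2 * a) * r := by
      rw [pow_succ]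
      nlinarith [le_abs_self (f 1), abs_nonneg (f 1)]

theorem stmt_8_general (z : ℕ → ℂ)
    (hfin : ∀ r : ℝ, ({k : ℕ | ‖z k‖ ≤ r}).Finite)
    (hsep : ∃ c : ℝ, 0 < c ∧ ∀ᶠ k in atTop, c * ‖z k‖ ≤ |(z k).re|)
    (C : ℝ) (hC : 0 ≤ C)
    (hl : ∀ r R : ℝ, 0 < r → r < R →
      max (∑' k : ℕ, if r < ‖z k‖ ∧ ‖z k‖ ≤ R ∧ 0 < (z k).re
              then ((z k)⁻¹).re else 0)
          (∑' k : ℕ, if r < ‖z k‖ ∧ ‖z k‖ ≤ R ∧ (z k).re < 0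
              then -((z k)⁻¹).re else 0)
        ≤ C * Real.log (R / r) + C) :
    Filter.IsBoundedUnder (· ≤ ·) Filter.atTop
      (fun r : ℝ => (Nat.card {k : ℕ | ‖z k‖ ≤ r} : ℝ) / r) := by
  obtain ⟨c, hc, hsepN⟩ := hsep
  obtain ⟨N, hN⟩ := eventually_atTop.mp hsepN
  have hB : 0 ≤ C * Real.log 2 + C := by positivity
  simp only [Nat.card_coe_set_eq]
  refine isBoundedUnder_div_of_le_two_mul (a := N + 4 / c * (C * Real.log 2 + C))
    (fun r s hrs => by exact_mod_cast Set.ncard_le_ncard (fun k hk => le_trans hk hrs) (hfin s))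
    (by positivity) fun r hr => ?_
  have hr0 : 0 < r := by linarith
  have hlr := hl r (2 * r) hr0 (by linarith)
  rw [mul_div_cancel_right₀ 2 hr0.ne'] at hlr
  have hP := (ncard_right_annulus_le z hc (by positivity) (hfin (2 * r)) hN (r := r)).trans
    (mul_le_mul_of_nonneg_left ((le_max_left _ _).trans hlr) (by positivity))
  have hM := (ncard_left_annulus_le z hc (by positivity) (hfin (2 * r)) hN (r := r)).trans
    (mul_le_mul_of_nonneg_left ((le_max_right _ _).trans hlr) (by positivity))
  have hcount := Nat.cast_le (α := ℝ) |>.2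
    (ncard_norm_le_le_add_annuli z hc hr0.le hfin hN (R := 2 * r))
  push_cast at hcount
  have hNr : (N : ℝ) ≤ N * r := le_mul_of_one_le_right N.cast_nonneg hr
  linarith [show (N + 4 / c * (C * Real.log 2 + C)) * r =
    N * r + 2 * r / c * (C * Real.log 2 + C) + 2 * r / c * (C * Real.log 2 + C) by ring]

/-- If a sequence `Z` (with no limit points, all terms nonzero) is separated from the imaginary
axis and its logarithmic characteristic `l_Z(r,R)` satisfies `l_Z(r,R) ≤ C·ln(R/r) + C`
for all `0 < r < R`, then `Z` has finite upper density. -/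
theorem stmt_8 (z : ℕ → ℂ) (hz : ∀ k, z k ≠ 0)
    (hfin : ∀ r : ℝ, ({k : ℕ | ‖z k‖ ≤ r}).Finite)
    (hsep : ∃ c : ℝ, 0 < c ∧ ∀ᶠ k in atTop, c * ‖z k‖ ≤ |(z k).re|)
    (C : ℝ) (hC : 0 ≤ C)
    (hl : ∀ r R : ℝ, 0 < r → r < R →
      max (∑' k : ℕ, if r < ‖z k‖ ∧ ‖z k‖ ≤ R ∧ 0 < (z k).re
              then ((z k)⁻¹).re else 0)
          (∑' k : ℕ, if r < ‖z k‖ ∧ ‖z k‖ ≤ R ∧ (z k).re < 0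
              then -((z k)⁻¹).re else 0)
        ≤ C * Real.log (R / r) + C) :
    Filter.IsBoundedUnder (· ≤ ·) Filter.atTop
      (fun r : ℝ => (Nat.card {k : ℕ | ‖z k‖ ≤ r} : ℝ) / r) :=
  stmt_8_general z hfin hsep C hC hl
end

section
/- Let W = {w_k} ⊂ {z : Re z > 0} be a sequence of finite upper density with w_k ≠ 0 for all k. Then the infinite product g(z) = Π_k (1 − z²/w_k²) converges locally uniformly on ℂ to an entire function of exponential type, i.e., limsup_{|z|→∞} ln|g(z)|/|z| < +∞, and g vanishes at every w_k and every −w_k (with multiplicity equal to the number of repetitions in W). -/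
/-!
Finite upper density and `w k ≠ 0` give one constant `A` with `#{k | ‖w k‖ ≤ t} ≤ A t` for every
`t > 0`, so the `j`-th smallest modulus is at least `j / A`. Hence `∑ 1 / ‖w k‖²` is dominated by
`A² ∑ 1 / j²`, which gives locally uniform convergence of the product, and by Euler's sine product
`|g z| ≤ ∏ₖ (1 + |z|² / |wₖ|²) ≤ ∏ⱼ (1 + (A |z|)² / j²) = sinh (π A |z|) / (π A |z|)`,
which is at most `exp (π A |z|)`. At `z₀`, each of the finitely many factors with `wₖ = ± z₀`
equals `(z - z₀) (-(z + z₀) / z₀²)`, and the product of the others does not vanish at `z₀`.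
-/

open Filter Complex

open Finset Topology

open scoped Real

def CountBoundedBy {ι : Type*} (a : ι → ℝ) (A : ℝ) : Prop :=
  ∀ t > 0, ∀ s : Finset ι, (∀ k ∈ s, a k ≤ t) → (#s : ℝ) ≤ A * t

theorem sum_le_sum_range_of_countBoundedBy {ι : Type*} [DecidableEq ι] (s : Finset ι) (a : ι → ℝ)
    (ha : ∀ k ∈ s, 0 < a k) {A : ℝ} (hA : 0 < A)
    (hcount : CountBoundedBy a A)
    {φ : ℝ → ℝ} (hφ : AntitoneOn φ (Set.Ioi 0)) :
    ∑ k ∈ s, φ (a k) ≤ ∑ j ∈ range #s, φ ((j + 1) / A) := by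
  induction s using Finset.induction_on_max_value a with
  | empty => simp
  | insert m s hm hmax ih =>
    have ham : 0 < a m := ha m (mem_insert_self m s)
    have hcard : ((#s : ℝ) + 1) ≤ A * a m := by
      have := hcount (a m) ham (insert m s) (by simpa using hmax)
      rwa [card_insert_of_notMem hm, Nat.cast_succ] at this
    have hle : φ (a m) ≤ φ ((#s + 1) / A) :=
      hφ (by simp only [Set.mem_Ioi]; positivity) ham
        ((div_le_iff₀ hA).2 (by linarith))
    rw [sum_insert hm, card_insert_of_notMem hm, sum_range_succ, add_comm]
    exact add_le_add (ih fun k hk => ha k (mem_insert_of_mem hk)) hle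

theorem prod_one_add_sq_div_le_exp {c : ℝ} (hc : 0 ≤ c) (n : ℕ) :
    ∏ j ∈ range n, (1 + c ^ 2 / ((j : ℝ) + 1) ^ 2) ≤ Real.exp (π * c) := by
  rcases hc.eq_or_lt with rfl | hc
  · simp
  set P : ℕ → ℝ := fun n => ∏ j ∈ range n, (1 + c ^ 2 / ((j : ℝ) + 1) ^ 2)
  have hP : Monotone P := monotone_nat_of_le_succ fun n => by
    simp only [P, prod_range_succ]
    exact le_mul_of_one_le_right (prod_nonneg fun j _ => by positivity)
      (le_add_of_nonneg_right (by positivity))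
  -- Euler's sine product at `z = c * I`
  have hlim : Tendsto P atTop (𝓝 (Real.sinh (π * c) / (π * c))) := by
    have hfactor : ∀ n, (π : ℂ) * (c * I) *
        ∏ j ∈ range n, (1 - (c * I) ^ 2 / ((j : ℂ) + 1) ^ 2) = ((π * c * P n : ℝ) : ℂ) * I :=
      fun n => by
      simp only [P]
      push_cast
      simp only [mul_pow, I_sq]
      ring_nf
    have h := Complex.tendsto_euler_sin_prod (c * I)
    simp_rw [hfactor] at h
    rw [← mul_assoc, ← ofReal_mul, sin_mul_I, ← ofReal_sinh] at h
    replace h := (continuous_im.tendsto _).comp h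
    simp only [Function.comp_def, mul_I_im, ofReal_re] at h
    convert h.div_const (π * c) using 2 with n
    field_simp
  have hsinh : Real.sinh (π * c) / (π * c) ≤ Real.exp (π * c) := by
    have hx : 0 < π * c := by positivity
    rw [div_le_iff₀ hx, Real.sinh_eq]
    have := Real.add_one_le_exp (-(2 * (π * c)))
    have he : Real.exp (-(π * c)) = Real.exp (π * c) * Real.exp (-(2 * (π * c))) := by
      rw [← Real.exp_add]; ring_nf
    rw [he]
    nlinarith [Real.exp_pos (π * c)]
  exact (hP.ge_of_tendsto hlim n).trans hsinh

section EntireProduct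

variable {f : ℕ → ℂ → ℂ} {u : ℕ → ℝ}

theorem hasProdLocallyUniformlyOn_one_add_of_norm_le_sq (hu : Summable u)
    (hf : ∀ k, Continuous (f k)) (hbound : ∀ k z, ‖f k z‖ ≤ ‖z‖ ^ 2 * u k) :
    HasProdLocallyUniformlyOn (fun k z => 1 + f k z) (fun z => ∏' k, (1 + f k z)) Set.univ := by
  refine hasProdLocallyUniformlyOn_of_forall_compact isOpen_univ fun K _ hK => ?_
  obtain ⟨R, hR⟩ := hK.isBounded.subset_closedBall 0
  refine Summable.hasProdUniformlyOn_nat_one_add hK (hu.mul_left (R ^ 2))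
    (Eventually.of_forall fun k z hz => (hbound k z).trans ?_) fun k => (hf k).continuousOn
  have hz : ‖z‖ ≤ R := by simpa using hR hz
  have hu0 : 0 ≤ u k := by simpa using (norm_nonneg _).trans (hbound k 1)
  gcongr

theorem tendstoLocallyUniformly_prod_range_one_add (hu : Summable u)
    (hf : ∀ k, Continuous (f k)) (hbound : ∀ k z, ‖f k z‖ ≤ ‖z‖ ^ 2 * u k) :
    TendstoLocallyUniformly (fun N z => ∏ k ∈ range N, (1 + f k z))
      (fun z => ∏' k, (1 + f k z)) atTop :=
  tendstoLocallyUniformlyOn_univ.1 (hasProdLocallyUniformlyOn_one_add_of_norm_le_sq hu hf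
    hbound).tendstoLocallyUniformlyOn_finsetRange

theorem differentiable_tprod_one_add (hu : Summable u)
    (hf : ∀ k, Differentiable ℂ (f k)) (hbound : ∀ k z, ‖f k z‖ ≤ ‖z‖ ^ 2 * u k) :
    Differentiable ℂ (fun z => ∏' k, (1 + f k z)) := by
  rw [← differentiableOn_univ]
  refine (tendstoLocallyUniformlyOn_univ.2 (tendstoLocallyUniformly_prod_range_one_add hu
    (fun k => (hf k).continuous) hbound)).differentiableOn (Eventually.of_forall fun N => ?_)
    isOpen_univ
  exact (Differentiable.fun_finsetProd fun k _ => (hf k).const_add 1).differentiableOn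

end EntireProduct

theorem tprod_one_add_eq_prod_mul_tprod_indicator {ι R : Type*} [NormedCommRing R]
    [NormOneClass R] [CompleteSpace R] {f : ι → R} (hf : Summable fun i => ‖f i‖)
    (s : Finset ι) :
    ∏' i, (1 + f i) = (∏ i ∈ s, (1 + f i)) * ∏' i, (1 + (↑s : Set ι)ᶜ.indicator f i) := by
  classical
  have hrest := (multipliable_one_add_of_summable (f := (↑s : Set ι)ᶜ.indicator f)
    (hf.of_nonneg_of_le (fun _ => norm_nonneg _) fun i => norm_indicator_le_norm_self f i)).hasProd
  have hs : HasProd (fun i => if i ∈ s then 1 + f i else 1) (∏ i ∈ s, (1 + f i)) := by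
    simpa [prod_ite_mem] using hasProd_prod_of_ne_finset_one (s := s)
      (f := fun i => if i ∈ s then 1 + f i else 1) fun i hi => if_neg hi
  refine ((hs.mul hrest).congr_fun ?_).tprod_eq
  intro i
  by_cases hi : i ∈ s <;> simp [hi]

section ZeroSequence

variable {w : ℕ → ℂ}

theorem exists_card_le_mul_of_isBoundedUnder (hw0 : ∀ k, w k ≠ 0)
    (hfin : ∀ r : ℝ, ({k : ℕ | ‖w k‖ ≤ r}).Finite)
    (hdens : IsBoundedUnder (· ≤ ·) atTop fun r : ℝ => (Nat.card {k : ℕ | ‖w k‖ ≤ r} : ℝ) / r) :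
    ∃ A > 0, CountBoundedBy (‖w ·‖) A := by
  obtain ⟨k₀, hk₀⟩ : ∃ k₀, ∀ k, ‖w k₀‖ ≤ ‖w k‖ := by
    refine Tendsto.exists_forall_le (tendsto_atTop.2 fun r => ?_)
    exact (hfin r).subset fun k (hk : ¬ r ≤ ‖w k‖) => (not_le.1 hk).le
  have hδ : 0 < ‖w k₀‖ := norm_pos_iff.2 (hw0 k₀)
  obtain ⟨b, hb⟩ := hdens
  obtain ⟨R, hR⟩ := eventually_atTop.1 (eventually_map.1 hb)
  set N : ℝ → ℝ := fun t => Nat.card {k : ℕ | ‖w k‖ ≤ t}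
  have hN : ∀ t, ∀ s : Finset ℕ, (∀ k ∈ s, ‖w k‖ ≤ t) → (#s : ℝ) ≤ N t := fun t s hs => by
    rw [← Nat.card_eq_finsetCard]
    simp only [N]
    exact_mod_cast Nat.card_mono (s := (s : Set ℕ)) (hfin t) hs
  have hA : 0 ≤ max b (N R / ‖w k₀‖) := le_max_of_le_right (by positivity)
  refine ⟨max b (N R / ‖w k₀‖) + 1, by positivity, fun t ht s hs => ?_⟩
  rcases s.eq_empty_or_nonempty with rfl | ⟨k, hk⟩
  · simp only [card_empty, Nat.cast_zero]; positivity
  refine (hN t s hs).trans ?_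
  have hδt : ‖w k₀‖ ≤ t := (hk₀ k).trans (hs k hk)
  rcases le_or_gt R t with hRt | htR
  · have : N t / t ≤ b := hR t hRt
    rw [div_le_iff₀ ht] at this
    nlinarith [le_max_left b (N R / ‖w k₀‖)]
  · have hmono : N t ≤ N R := Nat.cast_le.2 <|
      Nat.card_mono (hfin R) fun k (hk : ‖w k‖ ≤ t) => hk.trans htR.le
    have : N R ≤ N R / ‖w k₀‖ * t := by
      rw [div_mul_eq_mul_div, le_div_iff₀ hδ]
      exact mul_le_mul_of_nonneg_left hδt (by positivity)
    nlinarith [le_max_right b (N R / ‖w k₀‖)]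

theorem summable_inv_norm_sq (hw0 : ∀ k, w k ≠ 0) {A : ℝ} (hA : 0 < A)
    (hcount : CountBoundedBy (‖w ·‖) A) :
    Summable fun k => (‖w k‖ ^ 2)⁻¹ := by
  have hζ : Summable fun j : ℕ => 1 / ((j : ℝ) + 1) ^ 2 := by
    simpa using (summable_nat_add_iff 1).2 (Real.summable_one_div_nat_pow.2 one_lt_two)
  refine summable_of_sum_range_le (c := A ^ 2 * ∑' j : ℕ, 1 / ((j : ℝ) + 1) ^ 2)
    (fun k => by positivity) fun N => ?_
  have hanti : AntitoneOn (fun t : ℝ => (t ^ 2)⁻¹) (Set.Ioi 0) := fun a ha _ _ hab =>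
    inv_anti₀ (pow_pos ha 2) (pow_le_pow_left₀ (le_of_lt ha) hab 2)
  calc ∑ k ∈ range N, (‖w k‖ ^ 2)⁻¹
      ≤ ∑ j ∈ range #(range N), (((j + 1) / A) ^ 2)⁻¹ :=
        sum_le_sum_range_of_countBoundedBy _ _ (fun k _ => norm_pos_iff.2 (hw0 k)) hA hcount hanti
    _ = A ^ 2 * ∑ j ∈ range N, 1 / ((j : ℝ) + 1) ^ 2 := by
        rw [card_range, mul_sum]
        refine sum_congr rfl fun j _ => ?_
        field_simp
    _ ≤ A ^ 2 * ∑' j : ℕ, 1 / ((j : ℝ) + 1) ^ 2 := by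
        gcongr
        exact hζ.sum_le_tsum _ fun j _ => by positivity

theorem tendstoLocallyUniformly_prod_one_sub_sq_div (hsum : Summable fun k => (‖w k‖ ^ 2)⁻¹) :
    TendstoLocallyUniformly (fun N z => ∏ k ∈ range N, (1 - z ^ 2 / w k ^ 2))
      (fun z => ∏' k, (1 - z ^ 2 / w k ^ 2)) atTop := by
  simpa only [sub_eq_add_neg] using tendstoLocallyUniformly_prod_range_one_add hsum
    (f := fun k z => -(z ^ 2 / w k ^ 2)) (fun k => by fun_prop)
    fun k z => by simp [div_eq_mul_inv]

theorem differentiable_tprod_one_sub_sq_div (hsum : Summable fun k => (‖w k‖ ^ 2)⁻¹) :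
    Differentiable ℂ fun z => ∏' k, (1 - z ^ 2 / w k ^ 2) := by
  simpa only [sub_eq_add_neg] using differentiable_tprod_one_add hsum
    (f := fun k z => -(z ^ 2 / w k ^ 2)) (fun k => by fun_prop)
    fun k z => by simp [div_eq_mul_inv]

theorem norm_prod_one_sub_sq_div_le_exp (hw0 : ∀ k, w k ≠ 0) {A : ℝ} (hA : 0 < A)
    (hcount : CountBoundedBy (‖w ·‖) A)
    (z : ℂ) (N : ℕ) :
    ‖∏ k ∈ range N, (1 - z ^ 2 / w k ^ 2)‖ ≤ Real.exp (π * (A * ‖z‖)) := by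
  have hanti : AntitoneOn (fun t : ℝ => Real.log (1 + ‖z‖ ^ 2 / t ^ 2)) (Set.Ioi 0) :=
    fun a ha b _ hab => by
      simp only [Set.mem_Ioi] at ha
      exact Real.log_le_log (by positivity) (by gcongr)
  calc ‖∏ k ∈ range N, (1 - z ^ 2 / w k ^ 2)‖
      ≤ ∏ k ∈ range N, (1 + ‖z‖ ^ 2 / ‖w k‖ ^ 2) := by
        rw [norm_prod]
        refine prod_le_prod (fun k _ => norm_nonneg _) fun k _ => ?_
        exact (norm_sub_le _ _).trans_eq (by simp)
    _ = Real.exp (∑ k ∈ range N, Real.log (1 + ‖z‖ ^ 2 / ‖w k‖ ^ 2)) := by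
        rw [Real.exp_sum]
        exact prod_congr rfl fun k _ => (Real.exp_log (by positivity)).symm
    _ ≤ Real.exp (∑ j ∈ range N, Real.log (1 + (A * ‖z‖) ^ 2 / ((j : ℝ) + 1) ^ 2)) := by
        refine Real.exp_le_exp.2 ((sum_le_sum_range_of_countBoundedBy _ _
          (fun k _ => norm_pos_iff.2 (hw0 k)) hA hcount hanti).trans_eq ?_)
        rw [card_range]
        refine sum_congr rfl fun j _ => ?_
        field_simp
    _ = ∏ j ∈ range N, (1 + (A * ‖z‖) ^ 2 / ((j : ℝ) + 1) ^ 2) := by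
        rw [Real.exp_sum]
        exact prod_congr rfl fun j _ => Real.exp_log (by positivity)
    _ ≤ Real.exp (π * (A * ‖z‖)) := prod_one_add_sq_div_le_exp (by positivity) N

theorem log_norm_tprod_one_sub_sq_div_le (hw0 : ∀ k, w k ≠ 0) {A : ℝ} (hA : 0 < A)
    (hcount : CountBoundedBy (‖w ·‖) A) (z : ℂ) :
    Real.log ‖∏' k, (1 - z ^ 2 / w k ^ 2)‖ ≤ π * A * ‖z‖ := by
  have hlim := ((tendstoLocallyUniformly_prod_one_sub_sq_div
    (summable_inv_norm_sq hw0 hA hcount)).tendstoLocallyUniformlyOn.tendsto_at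
    (Set.mem_univ z)).norm
  have hle := le_of_tendsto' hlim (norm_prod_one_sub_sq_div_le_exp hw0 hA hcount z)
  rcases eq_or_ne (∏' k, (1 - z ^ 2 / w k ^ 2)) 0 with h | h
  · rw [h, norm_zero, Real.log_zero]
    positivity
  · rw [mul_assoc]
    exact (Real.log_le_iff_le_exp (norm_pos_iff.2 h)).2 hle

theorem exists_tprod_one_sub_sq_div_eq_pow_mul (hw0 : ∀ k, w k ≠ 0)
    (hsum : Summable fun k => (‖w k‖ ^ 2)⁻¹) (z₀ : ℂ) (F : Finset ℕ)
    (hF : ∀ k, k ∈ F ↔ w k = z₀ ∨ w k = -z₀) :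
    ∃ h : ℂ → ℂ, Differentiable ℂ h ∧ h z₀ ≠ 0 ∧
      ∀ z, ∏' k, (1 - z ^ 2 / w k ^ 2) = (z - z₀) ^ #F * h z := by
  set g : ℕ → ℂ → ℂ := fun k z => (↑F : Set ℕ)ᶜ.indicator (fun k => -(z ^ 2 / w k ^ 2)) k
  have hg : ∀ k z, ‖g k z‖ ≤ ‖z‖ ^ 2 * (‖w k‖ ^ 2)⁻¹ := fun k z =>
    (norm_indicator_le_norm_self _ _).trans (by simp [div_eq_mul_inv])
  have hsq : ∀ k ∈ F, w k ^ 2 = z₀ ^ 2 := fun k hk => by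
    rcases (hF k).1 hk with h | h <;> simp [h]
  have hz₀ : F.Nonempty → z₀ ≠ 0 := fun ⟨k, hk⟩ h0 => hw0 k (by simpa [h0] using hsq k hk)
  refine ⟨fun z => (-(z + z₀) / z₀ ^ 2) ^ #F * ∏' k, (1 + g k z), ?_, ?_, fun z => ?_⟩
  · refine Differentiable.mul (by fun_prop) (differentiable_tprod_one_add hsum (fun k => ?_) hg)
    by_cases hk : k ∈ F <;> simp [g, hk]
  · refine mul_ne_zero ?_ (tprod_one_add_ne_zero_of_summable (fun k => ?_)
      ((hsum.mul_left (‖z₀‖ ^ 2)).of_nonneg_of_le (fun _ => norm_nonneg _) (hg · z₀)))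
    · rcases F.eq_empty_or_nonempty with hF0 | hFne
      · simp [hF0]
      · have := hz₀ hFne
        refine pow_ne_zero _ (div_ne_zero (neg_ne_zero.2 ?_) (pow_ne_zero _ this))
        rw [← two_mul]
        exact mul_ne_zero two_ne_zero this
    · by_cases hk : k ∈ F
      · simp [g, hk]
      · simp only [g, Finset.mem_coe, Set.mem_compl_iff, hk, not_false_eq_true,
          Set.indicator_of_mem, ← sub_eq_add_neg, sub_ne_zero]
        intro h
        refine hk ((hF k).2 (sq_eq_sq_iff_eq_or_eq_neg.1 ?_))
        rw [eq_div_iff (pow_ne_zero 2 (hw0 k)), one_mul] at h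
        exact h
  · rw [show (fun k => 1 - z ^ 2 / w k ^ 2) = fun k => 1 + -(z ^ 2 / w k ^ 2) by
      simp only [sub_eq_add_neg],
      tprod_one_add_eq_prod_mul_tprod_indicator ((hsum.mul_left (‖z‖ ^ 2)).of_nonneg_of_le
        (fun _ => norm_nonneg _) fun k => by simp [div_eq_mul_inv]) F,
      prod_congr rfl fun k hk => ?factor, prod_const, mul_pow, mul_assoc]
    case factor =>
      rw [hsq k hk]
      field_simp [hz₀ ⟨k, hk⟩]
      ring

theorem natCard_fiber_add_natCard_fiber_neg_eq_card (hw0 : ∀ k, w k ≠ 0) (z₀ : ℂ) (F : Finset ℕ)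
    (hF : ∀ k, k ∈ F ↔ w k = z₀ ∨ w k = -z₀) :
    Nat.card {k : ℕ | w k = z₀} + Nat.card {k : ℕ | w k = -z₀} = #F := by
  have hset : ∀ c : ℂ, c = z₀ ∨ c = -z₀ →
      {k : ℕ | w k = c} = ↑(F.filter fun k => w k = c) := fun c hc => by
    ext k
    simp only [Set.mem_ofPred_eq, coe_filter, hF]
    constructor
    · rintro rfl; exact ⟨hc, rfl⟩
    · exact And.right
  have hneg : F.filter (fun k => w k = -z₀) = F.filter (fun k => ¬ w k = z₀) := by
    refine filter_congr fun k hk => ⟨fun h h' => hw0 k ?_, fun h => ((hF k).1 hk).resolve_left h⟩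
    linear_combination (h + h') / 2
  rw [hset z₀ (Or.inl rfl), hset (-z₀) (Or.inr rfl), Nat.card_coe_set_eq, Nat.card_coe_set_eq,
    Set.ncard_coe_finset, Set.ncard_coe_finset, hneg, card_filter_add_card_filter_not]

end ZeroSequence

/-- For a sequence `W = {w_k}` in the right half-plane of finite upper density, the product
`g(z) = Π_k (1 − z²/w_k²)` converges locally uniformly to an entire function of exponential
type which vanishes at each `±w_k` with multiplicity equal to the number of repetitions. -/
theorem stmt_10 (w : ℕ → ℂ) (hw : ∀ k, 0 < (w k).re)
    (hfin : ∀ r : ℝ, ({k : ℕ | ‖w k‖ ≤ r}).Finite)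
    (hdens : Filter.IsBoundedUnder (· ≤ ·) Filter.atTop
      (fun r : ℝ => (Nat.card {k : ℕ | ‖w k‖ ≤ r} : ℝ) / r)) :
    ∃ g : ℂ → ℂ,
      TendstoLocallyUniformly
        (fun N : ℕ => fun z : ℂ => ∏ k ∈ Finset.range N, (1 - z ^ 2 / (w k) ^ 2)) g atTop ∧
      Differentiable ℂ g ∧
      (∃ τ : ℝ, ∀ᶠ z : ℂ in Filter.comap (fun z : ℂ => ‖z‖) Filter.atTop,
        Real.log (‖g z‖) ≤ τ * ‖z‖) ∧
      (∀ z₀ : ℂ, ∃ h : ℂ → ℂ, Differentiable ℂ h ∧ h z₀ ≠ 0 ∧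
        ∀ z : ℂ, g z
          = (z - z₀) ^ (Nat.card {k : ℕ | w k = z₀} + Nat.card {k : ℕ | w k = -z₀}) * h z) := by
  have hw0 : ∀ k, w k ≠ 0 := fun k h => by simpa [h] using hw k
  obtain ⟨A, hA, hcount⟩ := exists_card_le_mul_of_isBoundedUnder hw0 hfin hdens
  have hsum := summable_inv_norm_sq hw0 hA hcount
  refine ⟨_, tendstoLocallyUniformly_prod_one_sub_sq_div hsum,
    differentiable_tprod_one_sub_sq_div hsum,
    ⟨π * A, .of_forall (log_norm_tprod_one_sub_sq_div_le hw0 hA hcount)⟩, fun z₀ => ?_⟩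
  have hF : {k | w k = z₀ ∨ w k = -z₀}.Finite :=
    (hfin ‖z₀‖).subset fun k hk => by rcases hk with h | h <;> simp [h]
  rw [natCard_fiber_add_natCard_fiber_neg_eq_card hw0 z₀ hF.toFinset (by simp)]
  exact exists_tprod_one_sub_sq_div_eq_pow_mul hw0 hsum z₀ _ (by simp)
end
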